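/- arXiv:1906.06157 — 2 statements merged into one kernel-verified Lean document; each statement's English description precedes it below -/
import Mathlib

section
/- For every k > 1 and every n ≥ 1, the first k^n - (k-1)^n windows of the (k,n)-prefer-max cycle are exactly the words of [k]^n that contain the symbol k-1; that is, {w_0, w_1, ..., w_{k^n-(k-1)^n-1}} = [k]^n \ [k-1]^n. -/
/-- `preferMaxAux k n i` is the list of windows `[wᵢ, wᵢ₋₁, ..., w₀]` of the
`(k,n)`-prefer-max cycle, newest first.  The first window is `w₀ = 0^{n-1}(k-1)` and,
if `wᵢ = σx`, then `wᵢ₊₁ = xτ` where `τ` is the maximal symbol in `[k] = {0,…,k-1}`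
such that `xτ` has not appeared among `w₀,…,wᵢ` (computed via `Nat.findGreatest`,
which returns `0` if no such symbol exists; the existence of such a symbol at each
step is part of the correctness of the construction). -/
def preferMaxAux (k n : ℕ) : ℕ → List (List ℕ)
  | 0 => [List.replicate (n - 1) 0 ++ [k - 1]]
  | i + 1 =>
    let prev := preferMaxAux k n i
    let w := prev.headI
    (w.tail ++ [Nat.findGreatest (fun τ => (w.tail ++ [τ]) ∉ prev) (k - 1)]) :: prev

/-- `preferMax k n i` is the `i`-th window `wᵢ` of the `(k,n)`-prefer-max cycle. -/
def preferMax (k n i : ℕ) : List ℕ := (preferMaxAux k n i).headI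

/-!
By induction, the first `N = k^n - (k-1)^n` windows are distinct words containing `k-1`;
as there are exactly `N` such words, they are all of them.

For the inductive step write `w_m = h x`. If `x` contains `k-1`, some `xτ` is still new:
otherwise the windows preceding the `k` words `xτ` would be `k` distinct words `cx`, one of
which is `w_m` itself. If `x` does not contain `k-1`, then `h = k-1` and `x(k-1)` is new,
since its predecessor would be `(k-1)x = w_m`, unless `x(k-1) = w_0`, i.e.
`w_m = (k-1)0^{n-1}`. In that case every word containing `k-1` has appeared already: as the
rule prefers large symbols, once `z0` has appeared (with `k-1 ∈ z`) so have all `zσ`, hence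
by the same pigeonhole all `cz`, and shifting `(k-1)0^{n-1}` back one letter at a time
reaches every word containing `k-1`, which forces `m + 1 ≥ N`.
-/

open Finset

namespace PreferMax

lemma exists_eq_append_cons_notMem_right {α : Type*} {a : α} {l : List α} (h : a ∈ l) :
    ∃ y s, l = y ++ a :: s ∧ a ∉ s := by
  obtain ⟨s, y, hsy, hs⟩ := List.eq_append_cons_of_mem (List.mem_reverse.mpr h)
  exact ⟨y.reverse, s.reverse, by simpa using congrArg List.reverse hsy,
    fun h => hs (List.mem_reverse.mp h)⟩

section Words

def words (m n : ℕ) : Finset (List ℕ) :=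
  univ.image fun f : Fin n → Fin m => List.ofFn fun j => (f j : ℕ)

variable {k m n : ℕ} {u : List ℕ}

lemma mem_words : u ∈ words m n ↔ u.length = n ∧ ∀ σ ∈ u, σ < m := by
  constructor
  · intro h
    obtain ⟨f, -, rfl⟩ := mem_image.mp h
    refine ⟨List.length_ofFn, fun σ hσ => ?_⟩
    obtain ⟨j, rfl⟩ := List.mem_ofFn.mp hσ
    exact (f j).isLt
  · rintro ⟨rfl, hu⟩
    exact mem_image.mpr
      ⟨fun j => ⟨u[j], hu _ (List.getElem_mem _)⟩, mem_univ _, List.ofFn_getElem⟩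

lemma card_words (m n : ℕ) : #(words m n) = m ^ n := by
  rw [words, card_image_of_injective, card_univ, Fintype.card_fun, Fintype.card_fin,
    Fintype.card_fin]
  intro f g h
  funext j
  exact Fin.ext (congrFun (List.ofFn_injective h) j)

def wordsWithMax (k n : ℕ) : Finset (List ℕ) := words k n \ words (k - 1) n

lemma mem_wordsWithMax :
    u ∈ wordsWithMax k n ↔ u.length = n ∧ (∀ σ ∈ u, σ < k) ∧ k - 1 ∈ u := by
  simp only [wordsWithMax, mem_sdiff, mem_words]
  constructor
  · rintro ⟨⟨hlen, hlt⟩, hnot⟩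
    refine ⟨hlen, hlt, by_contra fun hmax => hnot ⟨hlen, fun σ hσ => ?_⟩⟩
    have : σ ≠ k - 1 := fun h => hmax (h ▸ hσ)
    have := hlt σ hσ
    omega
  · rintro ⟨hlen, hlt, hmax⟩
    exact ⟨⟨hlen, hlt⟩, fun ⟨_, h⟩ => lt_irrefl _ (h _ hmax)⟩

lemma card_wordsWithMax (k n : ℕ) : #(wordsWithMax k n) = k ^ n - (k - 1) ^ n := by
  rw [wordsWithMax, card_sdiff_of_subset, card_words, card_words]
  intro u hu
  rw [mem_words] at hu ⊢
  exact ⟨hu.1, fun σ hσ => (hu.2 σ hσ).trans_le (Nat.sub_le k 1)⟩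

end Words

section Windows

variable {k n i j m σ τ : ℕ} {u z : List ℕ}

lemma preferMax_zero (k n : ℕ) : preferMax k n 0 = List.replicate (n - 1) 0 ++ [k - 1] := rfl

lemma preferMax_succ : preferMax k n (i + 1) = (preferMax k n i).tail ++
    [Nat.findGreatest (fun τ => (preferMax k n i).tail ++ [τ] ∉ preferMaxAux k n i) (k - 1)] :=
  rfl

def firstWindows (k n m : ℕ) : Finset (List ℕ) := (range m).image (preferMax k n)

lemma mem_firstWindows : u ∈ firstWindows k n m ↔ ∃ j < m, preferMax k n j = u := by
  simp [firstWindows]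

lemma firstWindows_mono : Monotone (firstWindows k n) :=
  fun _ _ h => image_subset_image (range_subset_range.mpr h)

lemma firstWindows_succ :
    firstWindows k n (m + 1) = insert (preferMax k n m) (firstWindows k n m) := by
  rw [firstWindows, range_add_one, image_insert, firstWindows]

lemma card_firstWindows_le : #(firstWindows k n m) ≤ m :=
  card_image_le.trans (card_range m).le

lemma injOn_of_card_firstWindows (h : #(firstWindows k n m) = m) :
    Set.InjOn (preferMax k n) (Set.Iio m) := by
  simpa using card_image_iff.mp (h.trans (card_range m).symm)

lemma preferMax_notMem_firstWindows (hinj : Set.InjOn (preferMax k n) (Set.Iio (m + 1))) :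
    preferMax k n m ∉ firstWindows k n m := by
  intro h
  obtain ⟨j, hj, hw⟩ := mem_firstWindows.mp h
  have := hinj (Set.mem_Iio.mpr (by omega)) (Set.mem_Iio.mpr (by omega)) hw
  omega

lemma mem_preferMaxAux : u ∈ preferMaxAux k n i ↔ u ∈ firstWindows k n (i + 1) := by
  induction i with
  | zero => simp [preferMaxAux, firstWindows, preferMax]
  | succ i ih =>
    rw [firstWindows_succ, mem_insert, ← ih]
    exact List.mem_cons

lemma length_preferMax (hn : 1 ≤ n) : ∀ i, (preferMax k n i).length = n
  | 0 => by
    simp only [preferMax_zero, List.length_append, List.length_replicate, List.length_singleton]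
    omega
  | i + 1 => by
    rw [preferMax_succ, List.length_append, List.length_tail, length_preferMax hn i]
    simp only [List.length_singleton]
    omega

lemma lt_of_mem_preferMax (hk : 0 < k) : ∀ {i σ : ℕ}, σ ∈ preferMax k n i → σ < k
  | 0, σ, h => by
    rcases List.mem_append.mp h with h | h
    · rw [List.eq_of_mem_replicate h]; exact hk
    · rw [List.mem_singleton.mp h]; omega
  | i + 1, σ, h => by
    rcases List.mem_append.mp (preferMax_succ ▸ h) with h | h
    · exact lt_of_mem_preferMax hk (List.mem_of_mem_tail h)
    · rw [List.mem_singleton.mp h]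
      exact (Nat.findGreatest_le _).trans_lt (by omega)

lemma preferMax_mem_wordsWithMax_iff (hk : 0 < k) (hn : 1 ≤ n) :
    preferMax k n i ∈ wordsWithMax k n ↔ k - 1 ∈ preferMax k n i := by
  simp only [mem_wordsWithMax, length_preferMax hn, true_and]
  exact and_iff_right fun _ => lt_of_mem_preferMax hk

lemma preferMax_zero_eq_append (h : preferMax k n 0 = z ++ [σ]) :
    z = List.replicate (n - 1) 0 ∧ σ = k - 1 := by
  obtain ⟨hz, hσ⟩ := List.append_inj' h rfl
  exact ⟨hz.symm, (List.singleton_inj.mp hσ).symm⟩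

lemma tail_preferMax_of_succ_eq (h : preferMax k n (j + 1) = z ++ [σ]) :
    (preferMax k n j).tail = z :=
  (List.append_inj' (preferMax_succ.symm.trans h) rfl).1

lemma preferMax_eq_cons_of_succ_eq (hk : 0 < k) (hn : 1 ≤ n)
    (h : preferMax k n (j + 1) = z ++ [σ]) : ∃ c < k, preferMax k n j = c :: z := by
  obtain ⟨c, t, hct⟩ := List.exists_cons_of_length_pos (l := preferMax k n j)
    (by rw [length_preferMax hn]; omega)
  have htail := tail_preferMax_of_succ_eq h
  rw [hct, List.tail_cons] at htail
  subst htail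
  exact ⟨c, lt_of_mem_preferMax hk (hct ▸ List.mem_cons_self), hct⟩

lemma append_mem_of_preferMax_succ_eq (h : preferMax k n (j + 1) = z ++ [σ]) (hστ : σ < τ)
    (hτ : τ < k) : z ++ [τ] ∈ firstWindows k n (j + 1) := by
  rw [← mem_preferMaxAux]
  obtain ⟨rfl, hσ⟩ := List.append_inj' (preferMax_succ.symm.trans h) rfl
  rw [List.singleton_inj] at hσ
  by_contra hnew
  exact Nat.findGreatest_is_greatest (hσ ▸ hστ) (by omega) hnew

lemma preferMax_succ_notMem
    (h : ∃ τ < k, (preferMax k n j).tail ++ [τ] ∉ firstWindows k n (j + 1)) :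
    preferMax k n (j + 1) ∉ firstWindows k n (j + 1) := by
  obtain ⟨τ, hτ, hnew⟩ := h
  rw [← mem_preferMaxAux] at hnew ⊢
  exact Nat.findGreatest_spec (P := fun τ => (preferMax k n j).tail ++ [τ] ∉ preferMaxAux k n j)
    (by omega : τ ≤ k - 1) hnew

lemma preferMax_succ_eq_of_notMem
    (h : (preferMax k n j).tail ++ [k - 1] ∉ firstWindows k n (j + 1)) :
    preferMax k n (j + 1) = (preferMax k n j).tail ++ [k - 1] := by
  rw [← mem_preferMaxAux] at h
  rw [preferMax_succ, Nat.findGreatest_eq h]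

end Windows

section FirstLayer

variable {k n m σ c : ℕ} {z : List ℕ}

lemma exists_preferMax_succ_eq (hk : 1 < k) (hz : k - 1 ∈ z)
    (h : z ++ [σ] ∈ firstWindows k n (m + 1)) :
    ∃ j < m, preferMax k n (j + 1) = z ++ [σ] := by
  obtain ⟨_ | j, hj, hw⟩ := mem_firstWindows.mp h
  · obtain ⟨rfl, -⟩ := preferMax_zero_eq_append hw
    have := List.eq_of_mem_replicate hz
    omega
  · exact ⟨j, by omega, hw⟩

/-- Pigeonhole: the predecessors of the `k` words `z ++ [σ]` are `k` distinct words
`c :: z`. -/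
lemma cons_mem_of_forall_append_mem (hk : 1 < k) (hn : 1 ≤ n)
    (hinj : Set.InjOn (preferMax k n) (Set.Iio (m + 1))) (hz : k - 1 ∈ z)
    (hall : ∀ σ < k, z ++ [σ] ∈ firstWindows k n (m + 1)) (hc : c < k) :
    c :: z ∈ firstWindows k n m := by
  choose J hJm hJ using fun σ (hσ : σ < k) => exists_preferMax_succ_eq hk hz (hall σ hσ)
  have hpred : ∀ σ (hσ : σ ∈ range k), preferMax k n (J σ (mem_range.mp hσ)) ∈
      (range k).image (· :: z) := by
    intro σ hσ
    obtain ⟨c, hc, hcz⟩ := preferMax_eq_cons_of_succ_eq (by omega) hn (hJ σ (mem_range.mp hσ))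
    exact mem_image.mpr ⟨c, mem_range.mpr hc, hcz.symm⟩
  have hpred_inj : ∀ σ σ' (hσ : σ ∈ range k) (hσ' : σ' ∈ range k),
      preferMax k n (J σ (mem_range.mp hσ)) = preferMax k n (J σ' (mem_range.mp hσ')) →
        σ = σ' := by
    intro σ σ' hσ hσ' heq
    have hidx := hinj (Set.mem_Iio.mpr ((hJm σ _).trans (Nat.lt_succ_self m)))
      (Set.mem_Iio.mpr ((hJm σ' _).trans (Nat.lt_succ_self m))) heq
    have := (hJ σ _).symm.trans (hidx ▸ hJ σ' _)
    simpa using this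
  obtain ⟨σ, hσ, hcz⟩ := surj_on_of_inj_on_of_card_le _ hpred hpred_inj
    card_image_le (c :: z) (mem_image.mpr ⟨c, mem_range.mpr hc, rfl⟩)
  exact mem_firstWindows.mpr ⟨_, hJm σ _, hcz.symm⟩

lemma cons_mem_of_append_zero_mem (hk : 1 < k) (hn : 1 ≤ n)
    (hinj : Set.InjOn (preferMax k n) (Set.Iio (m + 1))) (hz : k - 1 ∈ z)
    (h0 : z ++ [0] ∈ firstWindows k n (m + 1)) (hc : c < k) : c :: z ∈ firstWindows k n m := by
  obtain ⟨j, hj, hw⟩ := exists_preferMax_succ_eq hk hz h0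
  refine cons_mem_of_forall_append_mem hk hn hinj hz (fun σ hσ => ?_) hc
  rcases Nat.eq_zero_or_pos σ with rfl | hσ0
  · exact h0
  · exact firstWindows_mono (by omega) (append_mem_of_preferMax_succ_eq hw hσ0 hσ)

lemma append_mem_of_append_replicate_mem (hk : 1 < k) (hn : 1 ≤ n)
    (hinj : Set.InjOn (preferMax k n) (Set.Iio (m + 1))) :
    ∀ {y v : List ℕ}, k - 1 ∈ v → (∀ σ ∈ y, σ < k) →
      v ++ List.replicate y.length 0 ∈ firstWindows k n (m + 1) →
        y ++ v ∈ firstWindows k n (m + 1)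
  | [], _, _, _, h => by simpa using h
  | c :: y, v, hv, hy, h => by
    have hpad : (y ++ v) ++ [0] ∈ firstWindows k n (m + 1) := by
      rw [List.append_assoc]
      refine append_mem_of_append_replicate_mem hk hn hinj (List.mem_append_left _ hv)
        (fun σ hσ => hy σ (List.mem_cons_of_mem _ hσ)) ?_
      simpa [List.replicate_succ] using h
    exact firstWindows_mono (Nat.le_succ m) (cons_mem_of_append_zero_mem hk hn hinj
      (List.mem_append_right _ hv) hpad (hy c List.mem_cons_self))

lemma max_cons_mem_of_append_max_mem (hk : 1 < k) (hn : 1 ≤ n)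
    (hmax : firstWindows k n (m + 1) ⊆ wordsWithMax k n) (hz : k - 1 ∉ z)
    (h : z ++ [k - 1] ∈ firstWindows k n (m + 1)) :
    z = List.replicate (n - 1) 0 ∨ (k - 1) :: z ∈ firstWindows k n m := by
  obtain ⟨_ | j, hj, hw⟩ := mem_firstWindows.mp h
  · exact Or.inl (preferMax_zero_eq_append hw).1
  · obtain ⟨c, -, hcz⟩ := preferMax_eq_cons_of_succ_eq (by omega) hn hw
    have hc : k - 1 ∈ c :: z := hcz ▸ (preferMax_mem_wordsWithMax_iff (by omega) hn).mp
      (hmax (mem_firstWindows.mpr ⟨j, by omega, rfl⟩))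
    obtain rfl : k - 1 = c := by simpa [hz] using hc
    exact Or.inr (mem_firstWindows.mpr ⟨j, by omega, hcz⟩)

lemma max_cons_mem_of_preferMax_eq (hk : 1 < k) (hn : 1 ≤ n)
    (hinj : Set.InjOn (preferMax k n) (Set.Iio (m + 1)))
    (hmax : firstWindows k n (m + 1) ⊆ wordsWithMax k n)
    (hlast : preferMax k n m = (k - 1) :: List.replicate (n - 1) 0)
    (hz : z ∈ words k (n - 1)) (hzmax : k - 1 ∉ z) :
    (k - 1) :: z ∈ firstWindows k n (m + 1) := by
  have hlast_mem : (k - 1) :: List.replicate (n - 1) 0 ∈ firstWindows k n (m + 1) :=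
    hlast ▸ mem_firstWindows.mpr ⟨m, Nat.lt_succ_self m, rfl⟩
  obtain ⟨hlen, hlt⟩ := mem_words.mp hz
  have happ : z ++ [k - 1] ∈ firstWindows k n (m + 1) :=
    append_mem_of_append_replicate_mem hk hn hinj (List.mem_singleton_self _) hlt
      (by simpa [hlen] using hlast_mem)
  rcases max_cons_mem_of_append_max_mem hk hn hmax hzmax happ with rfl | h
  · exact hlast_mem
  · exact firstWindows_mono (Nat.le_succ m) h

lemma wordsWithMax_subset_firstWindows (hk : 1 < k) (hn : 1 ≤ n)
    (hinj : Set.InjOn (preferMax k n) (Set.Iio (m + 1)))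
    (hmax : firstWindows k n (m + 1) ⊆ wordsWithMax k n)
    (hlast : preferMax k n m = (k - 1) :: List.replicate (n - 1) 0) :
    wordsWithMax k n ⊆ firstWindows k n (m + 1) := by
  intro u hu
  obtain ⟨hlen, hlt, hu_max⟩ := mem_wordsWithMax.mp hu
  obtain ⟨y, s, rfl, hs⟩ := exists_eq_append_cons_notMem_right hu_max
  refine append_mem_of_append_replicate_mem hk hn hinj List.mem_cons_self
    (fun σ hσ => hlt σ (List.mem_append_left _ hσ))
    (max_cons_mem_of_preferMax_eq hk hn hinj hmax hlast (mem_words.mpr ⟨?_, ?_⟩) ?_)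
  · simp only [List.append_eq, List.length_append, List.length_cons,
      List.length_replicate] at hlen ⊢
    omega
  · intro σ hσ
    rcases List.mem_append.mp hσ with hσ | hσ
    · exact hlt σ (by simp [hσ])
    · rw [List.eq_of_mem_replicate hσ]
      omega
  · intro h
    rcases List.mem_append.mp h with h | h
    · exact hs h
    · have := List.eq_of_mem_replicate h
      omega

lemma preferMax_succ_notMem_and_mem_wordsWithMax (hk : 1 < k) (hn : 1 ≤ n)
    (hinj : Set.InjOn (preferMax k n) (Set.Iio (m + 1)))
    (hmax : firstWindows k n (m + 1) ⊆ wordsWithMax k n) (hm : m + 1 < k ^ n - (k - 1) ^ n) :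
    preferMax k n (m + 1) ∉ firstWindows k n (m + 1) ∧
      preferMax k n (m + 1) ∈ wordsWithMax k n := by
  have hold := preferMax_notMem_firstWindows hinj
  obtain ⟨h, x, hhx⟩ := List.exists_cons_of_length_pos (l := preferMax k n m)
    (by rw [length_preferMax hn]; omega)
  have htail : (preferMax k n m).tail = x := by rw [hhx, List.tail_cons]
  rw [preferMax_mem_wordsWithMax_iff (by omega) hn]
  by_cases hx : k - 1 ∈ x
  · have hfresh : ∃ τ < k, x ++ [τ] ∉ firstWindows k n (m + 1) := by
      by_contra! hall
      exact hold (hhx ▸ cons_mem_of_forall_append_mem hk hn hinj hx hall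
        (lt_of_mem_preferMax (by omega) (hhx ▸ List.mem_cons_self)))
    refine ⟨preferMax_succ_notMem (htail ▸ hfresh), ?_⟩
    rw [preferMax_succ, htail]
    exact List.mem_append_left _ hx
  · have hh : h = k - 1 := by
      have := (preferMax_mem_wordsWithMax_iff (by omega) hn).mp
        (hmax (mem_firstWindows.mpr ⟨m, Nat.lt_succ_self m, rfl⟩))
      rw [hhx] at this
      simpa [hx, eq_comm] using this
    subst hh
    have hfresh : x ++ [k - 1] ∉ firstWindows k n (m + 1) := by
      intro hmem
      rcases max_cons_mem_of_append_max_mem hk hn hmax hx hmem with rfl | hprev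
      · have := (card_le_card
          (wordsWithMax_subset_firstWindows hk hn hinj hmax hhx)).trans card_firstWindows_le
        rw [card_wordsWithMax] at this
        omega
      · exact hold (hhx ▸ hprev)
    rw [preferMax_succ_eq_of_notMem (htail ▸ hfresh), htail]
    exact ⟨hfresh, List.mem_append_right _ (List.mem_singleton_self _)⟩

lemma card_firstWindows_and_subset (hk : 1 < k) (hn : 1 ≤ n) :
    ∀ m < k ^ n - (k - 1) ^ n,
      #(firstWindows k n (m + 1)) = m + 1 ∧ firstWindows k n (m + 1) ⊆ wordsWithMax k n
  | 0, _ => by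
    rw [firstWindows_succ, firstWindows, range_zero, image_empty, insert_empty_eq,
      card_singleton, singleton_subset_iff, preferMax_mem_wordsWithMax_iff (by omega) hn]
    exact ⟨rfl, List.mem_append_right _ (List.mem_singleton_self _)⟩
  | m + 1, hm => by
    obtain ⟨hcard, hmax⟩ := card_firstWindows_and_subset hk hn m (by omega)
    obtain ⟨hnew, hmem⟩ := preferMax_succ_notMem_and_mem_wordsWithMax hk hn
      (injOn_of_card_firstWindows hcard) hmax hm
    rw [firstWindows_succ (m := m + 1), card_insert_of_notMem hnew, hcard]
    exact ⟨rfl, insert_subset hmem hmax⟩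

end FirstLayer

end PreferMax

/-- For every `k > 1` and `n ≥ 1`, the first `k^n - (k-1)^n` windows of the
`(k,n)`-prefer-max cycle are exactly the words of `[k]^n` that contain the
symbol `k-1`, i.e. `{w_0, …, w_{k^n-(k-1)^n-1}} = [k]^n \ [k-1]^n`. -/
theorem preferMax_first_layer (k n : ℕ) (hk : 1 < k) (hn : 1 ≤ n) (w : List ℕ) :
    (∃ i < k ^ n - (k - 1) ^ n, preferMax k n i = w) ↔
      (w.length = n ∧ (∀ σ ∈ w, σ < k) ∧ (k - 1) ∈ w) := by
  have hN : 0 < k ^ n - (k - 1) ^ n :=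
    Nat.sub_pos_of_lt (Nat.pow_lt_pow_left (by omega) (by omega))
  obtain ⟨hcard, hsub⟩ := PreferMax.card_firstWindows_and_subset hk hn _ (Nat.sub_one_lt hN.ne')
  rw [Nat.sub_add_cancel hN] at hcard hsub
  have hall : PreferMax.firstWindows k n _ = PreferMax.wordsWithMax k n :=
    Finset.eq_of_subset_of_card_le hsub (by rw [PreferMax.card_wordsWithMax, hcard])
  rw [← PreferMax.mem_wordsWithMax, ← hall, PreferMax.mem_firstWindows]
end

section
/- Let (w_i)_{i=0}^{k^n-1} be the (k,n)-prefer-max cycle with k ≥ 2, n ≥ 1, and let i_0 = min{ i : the symbol k-1 does not occur in w_i }. Then w_{i_0} = 0^{n-1}(k-2), i.e., the first window not containing k-1 consists of n-1 zeros followed by the symbol k-2. -/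
/-! As long as every window contains `k - 1`, the windows are pairwise distinct: a repetition at
step `i + 1` means that `τ` was chosen among seen words only, so all `k` extensions of
`z = tail wᵢ` have appeared, at positive indices because `z` contains `k - 1`; their
predecessors together with `wᵢ` would be `k + 1` distinct windows `c z`.

Now write `w_{i₀} = z τ`. As `τ ≠ k - 1` is the greatest unseen choice, `z (k - 1)` was seen
before. It cannot be a successor window, whose predecessor would be `(k - 1) z = w_{i₀-1}`, so it
is `w₀` and `z = 0^{n-1}`. Finally `z (k - 2)` lacks `k - 1`, hence is new, and `τ = k - 2`. -/

theorem List.headI_eq_of_mem_of_notMem_tail {α : Type*} [Inhabited α] {l : List α} {a : α}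
    (h : a ∈ l) (h' : a ∉ l.tail) : l.headI = a := by
  cases l with
  | nil => simp at h
  | cons c z => exact ((List.mem_cons.1 h).resolve_right h').symm

theorem List.headI_mem {α : Type*} [Inhabited α] {l : List α} (h : l ≠ []) : l.headI ∈ l := by
  cases l <;> simp_all

theorem List.eq_of_headI_eq_of_tail_eq {α : Type*} [Inhabited α] {l l' : List α} (hl : l ≠ [])
    (hl' : l' ≠ []) (hhead : l.headI = l'.headI) (htail : l.tail = l'.tail) : l = l' := by
  cases l <;> cases l' <;> simp_all

section PreferMax

variable {k n : ℕ}

def nextSymbol (k n i : ℕ) : ℕ :=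
  Nat.findGreatest (fun τ => (preferMax k n i).tail ++ [τ] ∉ preferMaxAux k n i) (k - 1)

theorem preferMax_zero : preferMax k n 0 = List.replicate (n - 1) 0 ++ [k - 1] := rfl

theorem preferMax_succ (i : ℕ) :
    preferMax k n (i + 1) = (preferMax k n i).tail ++ [nextSymbol k n i] := rfl

theorem preferMaxAux_eq_map (i : ℕ) :
    preferMaxAux k n i = (List.range (i + 1)).reverse.map (preferMax k n) := by
  induction i with
  | zero => rfl
  | succ i ih =>
    rw [List.range_succ, List.reverse_append, List.reverse_singleton, List.singleton_append,
      List.map_cons, ← ih]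
    rfl

theorem mem_preferMaxAux_iff {i : ℕ} {w : List ℕ} :
    w ∈ preferMaxAux k n i ↔ w ∈ preferMax k n '' Set.Iic i := by
  simp [preferMaxAux_eq_map]

theorem preferMax_ne_nil (i : ℕ) : preferMax k n i ≠ [] := by
  cases i <;> simp [preferMax_zero, preferMax_succ]

theorem le_of_mem_preferMax {i c : ℕ} (h : c ∈ preferMax k n i) : c ≤ k - 1 := by
  induction i with
  | zero => grind [preferMax_zero]
  | succ i ih =>
    rcases List.mem_append.1 (preferMax_succ (k := k) (n := n) i ▸ h) with h | h
    · exact ih (List.mem_of_mem_tail h)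
    · exact List.mem_singleton.1 h ▸ Nat.findGreatest_le _

theorem eq_replicate_of_preferMax_zero_eq {z : List ℕ} {t : ℕ}
    (h : preferMax k n 0 = z ++ [t]) : z = List.replicate (n - 1) 0 :=
  (List.append_inj' h rfl).1.symm

theorem tail_preferMax_of_succ_eq {i t : ℕ} {z : List ℕ} (h : preferMax k n (i + 1) = z ++ [t]) :
    (preferMax k n i).tail = z := by
  rw [← List.dropLast_concat (l₁ := (preferMax k n i).tail), ← preferMax_succ, h,
    List.dropLast_concat]

theorem eq_of_headI_eq_of_tail_eq {i a b : ℕ} (hinj : Set.InjOn (preferMax k n) (Set.Iic i))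
    (ha : a ≤ i) (hb : b ≤ i) (hhead : (preferMax k n a).headI = (preferMax k n b).headI)
    (htail : (preferMax k n a).tail = (preferMax k n b).tail) : a = b :=
  hinj ha hb (List.eq_of_headI_eq_of_tail_eq (preferMax_ne_nil a) (preferMax_ne_nil b) hhead htail)

theorem nextSymbol_le (i : ℕ) : nextSymbol k n i ≤ k - 1 := Nat.findGreatest_le _

theorem le_nextSymbol {i t : ℕ} (ht : t ≤ k - 1)
    (h : (preferMax k n i).tail ++ [t] ∉ preferMax k n '' Set.Iic i) : t ≤ nextSymbol k n i :=
  Nat.le_findGreatest ht (mem_preferMaxAux_iff.not.2 h)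

theorem tail_append_mem_image_of_preferMax_succ_mem {i t : ℕ} (ht : t ≤ k - 1)
    (h : preferMax k n (i + 1) ∈ preferMax k n '' Set.Iic i) :
    (preferMax k n i).tail ++ [t] ∈ preferMax k n '' Set.Iic i := by
  by_contra hnew
  rw [preferMax_succ, ← mem_preferMaxAux_iff] at h
  exact Nat.findGreatest_spec (P := fun τ => (preferMax k n i).tail ++ [τ] ∉ preferMaxAux k n i)
    ht (mem_preferMaxAux_iff.not.2 hnew) h

/-- The windows at positive indices are the successors; if all `k` windows `z τ` were among them,
their predecessors and `wᵢ` would be `k + 1` distinct windows of the form `c z`. -/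
theorem exists_tail_append_notMem_preferMax_image_Ioc (hk : 0 < k) {i : ℕ}
    (hinj : Set.InjOn (preferMax k n) (Set.Iic i)) :
    ∃ t < k, (preferMax k n i).tail ++ [t] ∉ preferMax k n '' Set.Ioc 0 i := by
  by_contra! hseen
  set z := (preferMax k n i).tail
  choose m hm hwm using fun t : Fin k => hseen t t.isLt
  replace hm (t : Fin k) : 0 < m t ∧ m t ≤ i := hm t
  have hpred (t : Fin k) : (preferMax k n (m t - 1)).tail = z :=
    tail_preferMax_of_succ_eq (Nat.sub_add_cancel (hm t).1 ▸ hwm t)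
  have hhead {j : ℕ} : (preferMax k n j).headI < k := by
    have := le_of_mem_preferMax (List.headI_mem (preferMax_ne_nil (k := k) (n := n) j))
    omega
  let predHead : Fin k → Fin k := fun t => ⟨(preferMax k n (m t - 1)).headI, hhead⟩
  have hinjHead : predHead.Injective := by
    intro t t' h
    have hidx : m t - 1 = m t' - 1 :=
      eq_of_headI_eq_of_tail_eq hinj (by grind) (by grind) (Fin.mk.inj_iff.1 h)
        ((hpred t).trans (hpred t').symm)
    have : z ++ [(t : ℕ)] = z ++ [(t' : ℕ)] := by
      rw [← hwm t, ← hwm t', show m t = m t' by grind]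
    exact Fin.ext (by simpa using this)
  obtain ⟨t, ht⟩ := Finite.injective_iff_surjective.1 hinjHead ⟨(preferMax k n i).headI, hhead⟩
  have : m t - 1 = i :=
    eq_of_headI_eq_of_tail_eq hinj (by grind) le_rfl (Fin.mk.inj_iff.1 ht) (hpred t)
  grind

theorem preferMax_succ_notMem_image (hk : 2 ≤ k) {i : ℕ}
    (hinj : Set.InjOn (preferMax k n) (Set.Iic i))
    (hmax : ∀ j ≤ i, k - 1 ∈ preferMax k n j) :
    preferMax k n (i + 1) ∉ preferMax k n '' Set.Iic i := by
  intro hseen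
  set z := (preferMax k n i).tail
  have hext {t : ℕ} (ht : t < k) : z ++ [t] ∈ preferMax k n '' Set.Iic i :=
    tail_append_mem_image_of_preferMax_succ_mem (by omega) hseen
  have hz : k - 1 ∈ z := by
    obtain ⟨m, hm, hwm⟩ := hext (t := 0) (by omega)
    have := hwm ▸ hmax m hm
    simpa [show k - 1 ≠ 0 by omega] using this
  obtain ⟨t, ht, hnew⟩ := exists_tail_append_notMem_preferMax_image_Ioc (by omega) hinj
  obtain ⟨m, hm, hwm⟩ := hext ht
  obtain rfl | hm0 := Nat.eq_zero_or_pos m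
  · rw [eq_replicate_of_preferMax_zero_eq hwm] at hz
    exact absurd (List.eq_of_mem_replicate hz) (by omega)
  · exact hnew ⟨m, ⟨hm0, hm⟩, hwm⟩

theorem injOn_preferMax (hk : 2 ≤ k) :
    ∀ i, (∀ j < i, k - 1 ∈ preferMax k n j) → Set.InjOn (preferMax k n) (Set.Iic i)
  | 0, _ => fun _ ha _ hb _ => (Nat.le_zero.1 ha).trans (Nat.le_zero.1 hb).symm
  | i + 1, hmax => by
    have hinj := injOn_preferMax hk i fun j hj => hmax j (by omega)
    rw [← Order.succ_eq_add_one, Order.Iic_succ, Set.injOn_insert (by simp)]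
    exact ⟨hinj, preferMax_succ_notMem_image hk hinj fun j hj => hmax j (by omega)⟩

theorem eq_zero_of_preferMax_eq_tail_append {j m t : ℕ}
    (hinj : Set.InjOn (preferMax k n) (Set.Iic j)) (hmax : ∀ i ≤ j, k - 1 ∈ preferMax k n i)
    (hz : k - 1 ∉ (preferMax k n j).tail) (hm : m ≤ j)
    (h : preferMax k n m = (preferMax k n j).tail ++ [t]) : m = 0 := by
  obtain _ | m := m
  · rfl
  have htail := tail_preferMax_of_succ_eq h
  have hhead : (preferMax k n m).headI = (preferMax k n j).headI := by
    rw [List.headI_eq_of_mem_of_notMem_tail (hmax m (by omega)) (htail ▸ hz),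
      List.headI_eq_of_mem_of_notMem_tail (hmax j le_rfl) hz]
  have := eq_of_headI_eq_of_tail_eq hinj (by omega) le_rfl hhead htail
  omega

end PreferMax

theorem preferMax_first_window_without_max_general (k n i₀ : ℕ) (hk : 2 ≤ k)
    (hi₀ : (k - 1) ∉ preferMax k n i₀)
    (hmin : ∀ j < i₀, (k - 1) ∈ preferMax k n j) :
    preferMax k n i₀ = List.replicate (n - 1) 0 ++ [k - 2] := by
  obtain ⟨j, rfl⟩ : ∃ j, i₀ = j + 1 :=
    Nat.exists_eq_add_one.2 (Nat.pos_of_ne_zero fun h => hi₀ (h ▸ by simp [preferMax_zero]))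
  have hmax : ∀ i ≤ j, k - 1 ∈ preferMax k n i := fun i hi => hmin i (by omega)
  have hinj := injOn_preferMax hk j fun i hi => hmax i hi.le
  rw [preferMax_succ] at hi₀ ⊢
  set z := (preferMax k n j).tail
  have hz : k - 1 ∉ z := fun h => hi₀ (List.mem_append_left _ h)
  have hnext : nextSymbol k n j ≠ k - 1 := fun h => hi₀ (by simp [h])
  have hseen : z ++ [k - 1] ∈ preferMax k n '' Set.Iic j := by
    by_contra h
    exact hnext (le_antisymm (nextSymbol_le j) (le_nextSymbol le_rfl h))
  obtain ⟨m, hm, hwm⟩ := hseen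
  have hzero : z = List.replicate (n - 1) 0 :=
    eq_replicate_of_preferMax_zero_eq (eq_zero_of_preferMax_eq_tail_append hinj hmax hz hm hwm ▸ hwm)
  have hfresh : z ++ [k - 2] ∉ preferMax k n '' Set.Iic j := by
    rintro ⟨i, hi, hwi⟩
    have := hwi ▸ hmax i hi
    simp only [List.mem_append, hz, List.mem_singleton, false_or] at this
    omega
  have := le_nextSymbol (by omega) hfresh
  have := nextSymbol_le (k := k) (n := n) j
  rw [hzero, show nextSymbol k n j = k - 2 by omega]

/-- Let `i₀ = min { i : the symbol k-1 does not occur in wᵢ }` for the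
`(k,n)`-prefer-max cycle with `k ≥ 2`, `n ≥ 1`.  Then `w_{i₀} = 0^{n-1}(k-2)`. -/
theorem preferMax_first_window_without_max (k n i₀ : ℕ) (hk : 2 ≤ k) (hn : 1 ≤ n)
    (hi₀ : (k - 1) ∉ preferMax k n i₀)
    (hmin : ∀ j < i₀, (k - 1) ∈ preferMax k n j) :
    preferMax k n i₀ = List.replicate (n - 1) 0 ++ [k - 2] :=
  preferMax_first_window_without_max_general k n i₀ hk hi₀ hmin
end
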